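/- Let p_λ(x₁,x₂) = (1−λ)p₀(x₁)p₀(x₂) + λp₁(x₁,x₂) where the support of p₁ is contained in the support of p₀(x₁)p₀(x₂). Then lim_{λ→0⁺} I_λ(X₁;X₂)/λ² = K₁, where K₁ = (1/(2 ln 2))·[χ²(p₁(x₁,x₂), p₀(x₁)p₀(x₂)) − χ²(p₁(x₁), p₀(x₁)) − χ²(p₁(x₂), p₀(x₂))], and K₁ ≥ 0. -/

import Mathlib

open scoped BigOperators Classical

/-- Kullback–Leibler divergence `D(p‖q)` (base-2 logarithm) on a finite alphabet. -/
noncomputable def klDiv {α : Type*} [Fintype α] (p q : α → ℝ) : ℝ :=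
  ∑ x, p x * Real.logb 2 (p x / q x)

/-- First marginal of a joint pmf. -/
noncomputable def marg₁ {α β : Type*} [Fintype β] (q : α × β → ℝ) (x : α) : ℝ :=
  ∑ y, q (x, y)

/-- Second marginal of a joint pmf. -/
noncomputable def marg₂ {α β : Type*} [Fintype α] (q : α × β → ℝ) (y : β) : ℝ :=
  ∑ x, q (x, y)

/-- Mutual information (base-2 logarithm) of a joint pmf on `α × β`. -/
noncomputable def miOfJoint {α β : Type*} [Fintype α] [Fintype β] (q : α × β → ℝ) : ℝ :=
  ∑ x, ∑ y, q (x, y) * Real.logb 2 (q (x, y) / (marg₁ q x * marg₂ q y))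

/-- Chi-squared divergence `χ²(p,q)` on a finite alphabet. -/
noncomputable def chiSq {α : Type*} [Fintype α] (p q : α → ℝ) : ℝ :=
  ∑ x, (p x - q x) ^ 2 / q x

/-- `p` is a probability mass function on the finite type `Ω`. -/
def IsPmf {Ω : Type*} [Fintype Ω] (p : Ω → ℝ) : Prop :=
  (∀ ω, 0 ≤ p ω) ∧ ∑ ω, p ω = 1

/-!
Write `r_λ = (1 - λ) q + λ p₁` with `q = p₀₁ ⊗ p₀₂`. Since `supp r_λ ⊆ supp q`, the chain rule
gives `I(r_λ) = D(r_λ ‖ q) - D(r_λ¹ ‖ p₀₁) - D(r_λ² ‖ p₀₂)`, and the marginals `r_λⁱ` are again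
mixtures, of `p₀ᵢ` and `p₁ⁱ`. When `Σ r = Σ q`, `D(r ‖ q) = Σ q · klFun (r / q) / ln 2`
where `klFun x = x ln x + 1 - x`; as `klFun (1 + u) ~ u² / 2` (L'Hôpital), each term of
`D((1 - λ) q + λ p ‖ q) / λ²` tends to `(p - q)² / (2 q ln 2)`, which gives `χ²(p, q) / (2 ln 2)`.
The limit is nonnegative because `I(r_λ) = D(r_λ ‖ r_λ¹ ⊗ r_λ²) ≥ 0`, by `klFun ≥ 0`.
-/

open Filter Topology Set Finset
open InformationTheory (klFun)

lemma tendsto_log_one_add_div_self :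
    Tendsto (fun u : ℝ => Real.log (1 + u) / u) (𝓝[≠] 0) (𝓝 1) := by
  simpa [div_eq_inv_mul] using
    hasDerivAt_iff_tendsto_slope_zero.mp (Real.hasDerivAt_log one_ne_zero)

lemma tendsto_klFun_one_add_div_sq :
    Tendsto (fun u : ℝ => klFun (1 + u) / u ^ 2) (𝓝[≠] 0) (𝓝 (1 / 2)) := by
  have hnum : Tendsto (fun u : ℝ => klFun (1 + u)) (𝓝 0) (𝓝 0) := by
    have : Continuous fun u : ℝ => klFun (1 + u) := by fun_prop
    simpa [InformationTheory.klFun_one] using this.tendsto 0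
  have hden : Tendsto (fun u : ℝ => u ^ 2) (𝓝 0) (𝓝 0) := by
    simpa using (continuous_pow 2).tendsto (0 : ℝ)
  refine deriv.lhopital_zero_nhdsNE ?_ ?_ (hnum.mono_left nhdsWithin_le_nhds)
    (hden.mono_left nhdsWithin_le_nhds) ?_
  · filter_upwards [nhdsWithin_le_nhds (Ioi_mem_nhds (show (-1 : ℝ) < 0 by norm_num))] with u hu
    have h : 1 + u ≠ 0 := by rw [Set.mem_Ioi] at hu; linarith
    exact (InformationTheory.hasDerivAt_klFun h).differentiableAt.comp u
      (differentiableAt_id.const_add 1)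
  · filter_upwards [self_mem_nhdsWithin] with u hu
    simpa using hu
  · simp only [deriv_comp_const_add, InformationTheory.deriv_klFun, deriv_pow_field]
    refine (tendsto_log_one_add_div_self.div_const 2).congr fun u => ?_
    norm_num [div_div, mul_comm]

/-- For `q = 0` both sides are `0`, by the convention `x / 0 = 0`. -/
lemma tendsto_mul_klFun_mix_div_sq (p q : ℝ) :
    Tendsto (fun l : ℝ => q * klFun (((1 - l) * q + l * p) / q) / l ^ 2) (𝓝[≠] 0)
      (𝓝 ((p - q) ^ 2 / q / 2)) := by
  rcases eq_or_ne q 0 with rfl | hq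
  · simp
  rcases eq_or_ne p q with rfl | hpq
  · have h : ∀ l : ℝ, ((1 - l) * p + l * p) / p = 1 := fun l => by field_simp; ring
    simp [h, InformationTheory.klFun_one]
  have hu : Tendsto (fun l : ℝ => l * (p - q) / q) (𝓝[≠] 0) (𝓝[≠] 0) := by
    refine tendsto_nhdsWithin_of_tendsto_nhds_of_eventually_within _ ?_ ?_
    · have : Continuous fun l : ℝ => l * (p - q) / q := by fun_prop
      simpa using this.continuousAt.tendsto.mono_left (nhdsWithin_le_nhds (a := (0 : ℝ)))
    · filter_upwards [self_mem_nhdsWithin] with l hl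
      exact div_ne_zero (mul_ne_zero hl (sub_ne_zero.mpr hpq)) hq
  have h := (tendsto_klFun_one_add_div_sq.comp hu).const_mul ((p - q) ^ 2 / q)
  rw [show (p - q) ^ 2 / q * (1 / 2) = (p - q) ^ 2 / q / 2 by ring] at h
  refine h.congr' ?_
  filter_upwards [self_mem_nhdsWithin] with l hl
  have hl : l ≠ 0 := hl
  rw [Function.comp_apply, show ((1 - l) * q + l * p) / q = 1 + l * (p - q) / q by
    field_simp; ring]
  field_simp

lemma mul_klFun_div {p q : ℝ} (hsupp : q = 0 → p = 0) :
    q * klFun (p / q) = p * Real.log (p / q) + q - p := by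
  rcases eq_or_ne q 0 with rfl | hq
  · simp [hsupp rfl]
  rw [InformationTheory.klFun_apply]
  field_simp

section Divergence

variable {α : Type*} [Fintype α] {p q : α → ℝ}

lemma klDiv_eq_sum_mul_klFun (hsupp : ∀ x, q x = 0 → p x = 0) (hsum : ∑ x, p x = ∑ x, q x) :
    klDiv p q = (∑ x, q x * klFun (p x / q x)) / Real.log 2 := by
  simp only [mul_klFun_div (hsupp _), sum_sub_distrib, sum_add_distrib, hsum, add_sub_cancel_right]
  simp only [klDiv, Real.logb, sum_div, mul_div_assoc]

lemma klDiv_nonneg (hp : ∀ x, 0 ≤ p x) (hq : ∀ x, 0 ≤ q x) (hsupp : ∀ x, q x = 0 → p x = 0)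
    (hsum : ∑ x, p x = ∑ x, q x) : 0 ≤ klDiv p q := by
  rw [klDiv_eq_sum_mul_klFun hsupp hsum]
  refine div_nonneg (sum_nonneg fun x _ => ?_) (Real.log_nonneg one_le_two)
  exact mul_nonneg (hq x) (InformationTheory.klFun_nonneg (div_nonneg (hp x) (hq x)))

lemma tendsto_klDiv_mix_div_sq (hsupp : ∀ x, q x = 0 → p x = 0) (hsum : ∑ x, p x = ∑ x, q x) :
    Tendsto (fun l : ℝ => klDiv (fun x => (1 - l) * q x + l * p x) q / l ^ 2) (𝓝[≠] 0)
      (𝓝 (1 / (2 * Real.log 2) * chiSq p q)) := by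
  have hmix : ∀ l : ℝ, klDiv (fun x => (1 - l) * q x + l * p x) q / l ^ 2
      = (∑ x, q x * klFun (((1 - l) * q x + l * p x) / q x) / l ^ 2) / Real.log 2 := by
    intro l
    rw [klDiv_eq_sum_mul_klFun (fun x hx => by simp [hx, hsupp x hx]), ← sum_div, div_right_comm]
    simp only [sum_add_distrib, ← mul_sum, hsum]
    ring
  simp only [hmix]
  convert (tendsto_finsetSum univ fun x _ => tendsto_mul_klFun_mix_div_sq (p x) (q x)).div_const
    (Real.log 2) using 2
  rw [chiSq, ← sum_div]
  ring

lemma IsPmf.mix (hq : IsPmf q) (hp : IsPmf p) {l : ℝ} (hl : l ∈ Icc (0 : ℝ) 1) :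
    IsPmf fun x => (1 - l) * q x + l * p x :=
  ⟨fun x => add_nonneg (mul_nonneg (sub_nonneg.mpr hl.2) (hq.1 x)) (mul_nonneg hl.1 (hp.1 x)), by
    rw [sum_add_distrib, ← mul_sum, ← mul_sum, hq.2, hp.2]
    ring⟩

end Divergence

section Joint

variable {α β : Type*}

lemma sum_marg₁ [Fintype α] [Fintype β] (r : α × β → ℝ) : ∑ x, marg₁ r x = ∑ z, r z :=
  (Fintype.sum_prod_type r).symm

lemma sum_marg₂ [Fintype α] [Fintype β] (r : α × β → ℝ) : ∑ y, marg₂ r y = ∑ z, r z :=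
  (Fintype.sum_prod_type_right r).symm

lemma le_marg₁ [Fintype β] {r : α × β → ℝ} (hr : ∀ z, 0 ≤ r z) (x : α) (y : β) :
    r (x, y) ≤ marg₁ r x :=
  single_le_sum (fun y _ => hr (x, y)) (mem_univ y)

lemma le_marg₂ [Fintype α] {r : α × β → ℝ} (hr : ∀ z, 0 ≤ r z) (x : α) (y : β) :
    r (x, y) ≤ marg₂ r y :=
  single_le_sum (fun x _ => hr (x, y)) (mem_univ x)

lemma marg₁_mix [Fintype β] {q₁ : α → ℝ} {q₂ : β → ℝ} (hq₂ : ∑ y, q₂ y = 1) (p : α × β → ℝ)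
    (l : ℝ) : marg₁ (fun z => (1 - l) * (q₁ z.1 * q₂ z.2) + l * p z)
      = fun x => (1 - l) * q₁ x + l * marg₁ p x := by
  ext x
  simp only [marg₁, sum_add_distrib, ← mul_sum, hq₂, mul_one]

lemma marg₂_mix [Fintype α] {q₁ : α → ℝ} {q₂ : β → ℝ} (hq₁ : ∑ x, q₁ x = 1) (p : α × β → ℝ)
    (l : ℝ) : marg₂ (fun z => (1 - l) * (q₁ z.1 * q₂ z.2) + l * p z)
      = fun y => (1 - l) * q₂ y + l * marg₂ p y := by
  ext y
  simp only [marg₂, sum_add_distrib, ← mul_sum, ← sum_mul, hq₁, one_mul]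

lemma miOfJoint_eq_klDiv_sub [Fintype α] [Fintype β] {r : α × β → ℝ} {q₁ : α → ℝ} {q₂ : β → ℝ}
    (hr : ∀ z, 0 ≤ r z) (hsupp : ∀ x y, q₁ x * q₂ y = 0 → r (x, y) = 0) :
    miOfJoint r = klDiv r (fun z => q₁ z.1 * q₂ z.2) - klDiv (marg₁ r) q₁ - klDiv (marg₂ r) q₂ := by
  have hpoint : ∀ x y, r (x, y) * Real.logb 2 (r (x, y) / (marg₁ r x * marg₂ r y))
      = r (x, y) * Real.logb 2 (r (x, y) / (q₁ x * q₂ y))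
        - r (x, y) * Real.logb 2 (marg₁ r x / q₁ x)
        - r (x, y) * Real.logb 2 (marg₂ r y / q₂ y) := by
    intro x y
    rcases (hr (x, y)).eq_or_lt with hxy | hxy
    · simp [← hxy]
    have hq : q₁ x * q₂ y ≠ 0 := fun h => hxy.ne' (hsupp x y h)
    have hm₁ : marg₁ r x ≠ 0 := (hxy.trans_le (le_marg₁ hr x y)).ne'
    have hm₂ : marg₂ r y ≠ 0 := (hxy.trans_le (le_marg₂ hr x y)).ne'
    rw [Real.logb_div hxy.ne' (mul_ne_zero hm₁ hm₂), Real.logb_div hxy.ne' hq,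
      Real.logb_div hm₁ (left_ne_zero_of_mul hq), Real.logb_div hm₂ (right_ne_zero_of_mul hq),
      Real.logb_mul hm₁ hm₂, Real.logb_mul (left_ne_zero_of_mul hq) (right_ne_zero_of_mul hq)]
    ring
  have h₁ : ∑ x, ∑ y, r (x, y) * Real.logb 2 (marg₁ r x / q₁ x) = klDiv (marg₁ r) q₁ :=
    sum_congr rfl fun x _ => (sum_mul ..).symm
  have h₂ : ∑ x, ∑ y, r (x, y) * Real.logb 2 (marg₂ r y / q₂ y) = klDiv (marg₂ r) q₂ :=
    sum_comm.trans (sum_congr rfl fun y _ => (sum_mul ..).symm)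
  simp only [miOfJoint, hpoint, sum_sub_distrib, h₁, h₂, klDiv, Fintype.sum_prod_type]

lemma IsPmf.prod [Fintype α] [Fintype β] {q₁ : α → ℝ} {q₂ : β → ℝ} (h₁ : IsPmf q₁) (h₂ : IsPmf q₂) :
    IsPmf fun z : α × β => q₁ z.1 * q₂ z.2 :=
  ⟨fun z => mul_nonneg (h₁.1 z.1) (h₂.1 z.2), by
    rw [Fintype.sum_prod_type, ← h₁.2]
    simp only [← mul_sum, h₂.2, mul_one]⟩

lemma IsPmf.marg₁ [Fintype α] [Fintype β] {r : α × β → ℝ} (h : IsPmf r) : IsPmf (marg₁ r) :=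
  ⟨fun x => sum_nonneg fun y _ => h.1 (x, y), (sum_marg₁ r).trans h.2⟩

lemma IsPmf.marg₂ [Fintype α] [Fintype β] {r : α × β → ℝ} (h : IsPmf r) : IsPmf (marg₂ r) :=
  ⟨fun y => sum_nonneg fun x _ => h.1 (x, y), (sum_marg₂ r).trans h.2⟩

lemma miOfJoint_nonneg [Fintype α] [Fintype β] {r : α × β → ℝ} (h : IsPmf r) : 0 ≤ miOfJoint r := by
  have hmi : miOfJoint r = klDiv r fun z => marg₁ r z.1 * marg₂ r z.2 := by
    rw [klDiv, Fintype.sum_prod_type]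
    rfl
  rw [hmi]
  have hprod := h.marg₁.prod h.marg₂
  refine klDiv_nonneg h.1 hprod.1 (fun z hz => ?_) (h.2.trans hprod.2.symm)
  rcases mul_eq_zero.mp hz with hz | hz
  · exact le_antisymm (hz ▸ le_marg₁ h.1 z.1 z.2) (h.1 z)
  · exact le_antisymm (hz ▸ le_marg₂ h.1 z.1 z.2) (h.1 z)

end Joint

/-- As `λ → 0⁺`, `I_λ(X₁;X₂)/λ²` tends to
`K₁ = (1/(2 ln 2))·[χ²(p₁, p₀×p₀) − χ²(p₁(x₁), p₀(x₁)) − χ²(p₁(x₂), p₀(x₂))] ≥ 0`. -/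
theorem mutualInfo_mixture_div_sq_tendsto {𝒳₁ 𝒳₂ : Type*} [Fintype 𝒳₁] [Fintype 𝒳₂]
    (p₀₁ : 𝒳₁ → ℝ) (p₀₂ : 𝒳₂ → ℝ) (p₁ : 𝒳₁ × 𝒳₂ → ℝ)
    (h₀₁ : IsPmf p₀₁) (h₀₂ : IsPmf p₀₂) (h₁ : IsPmf p₁)
    (hsupp : ∀ x₁ x₂, p₀₁ x₁ * p₀₂ x₂ = 0 → p₁ (x₁, x₂) = 0) :
    Filter.Tendsto
      (fun lam : ℝ =>
        miOfJoint (fun z : 𝒳₁ × 𝒳₂ => (1 - lam) * (p₀₁ z.1 * p₀₂ z.2) + lam * p₁ z) / lam ^ 2)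
      (nhdsWithin 0 (Set.Ioi 0))
      (nhds ((1 / (2 * Real.log 2)) *
        (chiSq p₁ (fun z : 𝒳₁ × 𝒳₂ => p₀₁ z.1 * p₀₂ z.2)
          - chiSq (marg₁ p₁) p₀₁ - chiSq (marg₂ p₁) p₀₂)))
    ∧ 0 ≤ (1 / (2 * Real.log 2)) *
        (chiSq p₁ (fun z : 𝒳₁ × 𝒳₂ => p₀₁ z.1 * p₀₂ z.2)
          - chiSq (marg₁ p₁) p₀₁ - chiSq (marg₂ p₁) p₀₂) := by
  have hq : IsPmf fun z : 𝒳₁ × 𝒳₂ => p₀₁ z.1 * p₀₂ z.2 := h₀₁.prod h₀₂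
  have hsupp₁ : ∀ x, p₀₁ x = 0 → marg₁ p₁ x = 0 := fun x hx =>
    sum_eq_zero fun y _ => hsupp x y (by rw [hx, zero_mul])
  have hsupp₂ : ∀ y, p₀₂ y = 0 → marg₂ p₁ y = 0 := fun y hy =>
    sum_eq_zero fun x _ => hsupp x y (by rw [hy, mul_zero])
  have hkl := ((tendsto_klDiv_mix_div_sq (fun z hz => hsupp z.1 z.2 hz) (h₁.2.trans hq.2.symm)).sub
    (tendsto_klDiv_mix_div_sq hsupp₁ (h₁.marg₁.2.trans h₀₁.2.symm))).sub
    (tendsto_klDiv_mix_div_sq hsupp₂ (h₁.marg₂.2.trans h₀₂.2.symm))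
  rw [← mul_sub, ← mul_sub] at hkl
  have hmix : ∀ᶠ l in 𝓝[>] (0 : ℝ), l ∈ Icc (0 : ℝ) 1 :=
    mem_of_superset (Ioo_mem_nhdsGT one_pos) Ioo_subset_Icc_self
  have hlim : Tendsto (fun l : ℝ =>
      miOfJoint (fun z : 𝒳₁ × 𝒳₂ => (1 - l) * (p₀₁ z.1 * p₀₂ z.2) + l * p₁ z) / l ^ 2)
      (𝓝[>] 0) _ :=
    (hkl.mono_left (nhdsWithin_mono _ fun l hl => (Set.mem_Ioi.mp hl).ne')).congr' <| by
      filter_upwards [hmix] with l hl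
      rw [miOfJoint_eq_klDiv_sub (q₁ := p₀₁) (q₂ := p₀₂) (hq.mix h₁ hl).1
        fun x y h => by simp [h, hsupp x y h],
        marg₁_mix h₀₂.2, marg₂_mix h₀₁.2, sub_div, sub_div]
  refine ⟨hlim, ge_of_tendsto hlim ?_⟩
  filter_upwards [hmix] with l hl
  exact div_nonneg (miOfJoint_nonneg (hq.mix h₁ hl)) (sq_nonneg l)
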